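/- Let n ≥ 3 be an integer. Then the coefficient of the monomial T_2·T_n² in R_{n+1} equals −n(n+1); that is, c_{(n,n,2)}^{(n+1)} = −n(n+1). -/

import Mathlib

open MvPolynomial

noncomputable section

/-- Linear extension to polynomials of a map defined on exponent vectors (monomials). -/
def extendMon (f : (ℕ →₀ ℕ) → MvPolynomial ℕ ℝ) (P : MvPolynomial ℕ ℝ) :
    MvPolynomial ℕ ℝ :=
  ∑ d ∈ P.support, P.coeff d • f d

/-- Action of `D₁` on the monomial with exponent vector `d`. -/
def D1mon (d : ℕ →₀ ℕ) : MvPolynomial ℕ ℝ :=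
  ∑ i ∈ d.support,
    (d i : ℝ) • monomial (d - Finsupp.single i 1 + Finsupp.single (i + 1) 1) (1 : ℝ)

/-- Action of `D₂` on the monomial with exponent vector `d`. -/
def D2mon (d : ℕ →₀ ℕ) : MvPolynomial ℕ ℝ :=
  ∑ i ∈ d.support,
    (d i : ℝ) • monomial (d - Finsupp.single i 1 + Finsupp.single (i + 2) 1) (1 : ℝ)

def D1op : MvPolynomial ℕ ℝ → MvPolynomial ℕ ℝ := extendMon D1mon

def D2op : MvPolynomial ℕ ℝ → MvPolynomial ℕ ℝ := extendMon D2mon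

/-- The operator `L = (D₁ ∘ D₁ - D₂)/2`. -/
def Lop (P : MvPolynomial ℕ ℝ) : MvPolynomial ℕ ℝ :=
  (1 / 2 : ℝ) • (D1op (D1op P) - D2op P)

/-- Action of `H` on the monomial with exponent vector `d`. -/
def Hmon (d : ℕ →₀ ℕ) : MvPolynomial ℕ ℝ :=
  (-(1 / 2) : ℝ) • ∑ i ∈ d.support, ∑ l ∈ Finset.Ico 1 i,
    ((d i : ℝ) * (i.choose l : ℝ)) •
      monomial (d - Finsupp.single i 1 + Finsupp.single (1 + l) 1
        + Finsupp.single (1 + i - l) 1) (1 : ℝ)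

def Hop : MvPolynomial ℕ ℝ → MvPolynomial ℕ ℝ := extendMon Hmon

/-- `A_n = -∑_{k=1}^{n-1} C(n,k) T_{1+k} T_{1+n-k} T_n`. -/
def Apoly (n : ℕ) : MvPolynomial ℕ ℝ :=
  - ∑ k ∈ Finset.Ico 1 n, (n.choose k : ℝ) • (X (1 + k) * X (1 + n - k) * X n)

/-- The polynomials `R_n`: `R_2 = 0` and `R_{n+1} = A_n + L(R_n) + H(R_n)` for `n ≥ 2`. -/
def Rpoly : ℕ → MvPolynomial ℕ ℝ
  | 0 => 0
  | 1 => 0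
  | 2 => 0
  | (n + 3) => Apoly (n + 2) + Lop (Rpoly (n + 2)) + Hop (Rpoly (n + 2))

/-- The monomial `T_α = T_{α₁} ⋯ T_{α_r}` attached to a tuple (multiset) `α`. -/
def Tmon (α : Multiset ℕ) : MvPolynomial ℕ ℝ := (α.map X).prod

/-- `c_α^{(n)}`: the coefficient of the monomial `T_α` in `R_n`. -/
def coeffR (n : ℕ) (α : Multiset ℕ) : ℝ :=
  MvPolynomial.coeff (Multiset.toFinsupp α) (Rpoly n)

/-- `l_{β,α}`: the coefficient of `T_α` in `L(T_β)`. -/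
def lcoef (β α : Multiset ℕ) : ℝ :=
  MvPolynomial.coeff (Multiset.toFinsupp α) (Lop (Tmon β))

/-- `h_{β,α}`: the coefficient of `T_α` in `H(T_β)`. -/
def hcoef (β α : Multiset ℕ) : ℝ :=
  MvPolynomial.coeff (Multiset.toFinsupp α) (Hop (Tmon β))

/-- `I_{r,n}`: partitions of `2n` of length `r` with parts between `2` and `n-1`. -/
def Ipart (r n : ℕ) : Finset (Multiset ℕ) :=
  ((Finset.univ : Finset (Nat.Partition (2 * n))).image Nat.Partition.parts).filter
    (fun m => Multiset.card m = r ∧ ∀ a ∈ m, 2 ≤ a ∧ a ≤ n - 1)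

/-- `I_n`: partitions of `2n` of length between `3` and `n`, parts between `2` and `n-1`. -/
def IpartAll (n : ℕ) : Finset (Multiset ℕ) :=
  ((Finset.univ : Finset (Nat.Partition (2 * n))).image Nat.Partition.parts).filter
    (fun m => 3 ≤ Multiset.card m ∧ Multiset.card m ≤ n ∧ ∀ a ∈ m, 2 ≤ a ∧ a ≤ n - 1)

/-- The polynomial `a_{n,k}`. -/
def ank (n k : ℕ) : MvPolynomial ℕ ℝ :=
  ∑ α ∈ (IpartAll (n + 1)).filter (fun α => (n - k) ∈ α ∧ ∀ a ∈ α, a ≤ n - k),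
    C (coeffR (n + 1) α) * Tmon (α.erase (n - k))

/-- The polynomial `a_n = a_{n,0} - c_{(n,n,2)}^{(n+1)} T_2 T_n`. -/
def aform (n : ℕ) : MvPolynomial ℕ ℝ :=
  ank n 0 - C (coeffR (n + 1) {n, n, 2}) * (X 2 * X n)


/-!
All monomials of `R_n` have parts `≥ 2` and at least three factors: `A_n` is cubic in such
variables, `L` preserves both properties and `H` adds a factor. In particular `H(R_m)` does not
contain the cubic monomial `T_2 T_m²`. The operators `D_k` are computed through their transpose:
the coefficient of `T^t` in `D_k P` is `∑_j (t_{j-k} + 1) · [T^{t - e_j + e_{j-k}}] P`, and the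
terms with `j - k < 2` vanish on such `P`. For `m ≥ 4` this shows that `L` sends only
`T_2 T_{m-1}²` to `T_2 T_m²`, with coefficient one, while `A_m` contributes `-2m` (from `k = 1`
and `k = m - 1`). Hence `c^{(m+1)}_{(m,m,2)} = c^{(m)}_{(m-1,m-1,2)} - 2m`, starting from
`c^{(4)}_{(3,3,2)} = -6 + 3 · c^{(3)}_{(2,2,2)} = -12`.
-/

open Finsupp (single)

lemma coeff_extendMon (f : (ℕ →₀ ℕ) → MvPolynomial ℕ ℝ) (P : MvPolynomial ℕ ℝ)
    (t : ℕ →₀ ℕ) : coeff t (extendMon f P) = ∑ d ∈ P.support, P.coeff d * coeff t (f d) := by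
  simp only [extendMon, coeff_sum, coeff_smul, smul_eq_mul]

def shiftMon (k : ℕ) (d : ℕ →₀ ℕ) : MvPolynomial ℕ ℝ :=
  ∑ i ∈ d.support, (d i : ℝ) • monomial (d - single i 1 + single (i + k) 1) (1 : ℝ)

lemma sub_single_add_single_eq_iff {d t : ℕ →₀ ℕ} {i k : ℕ} (hk : 1 ≤ k) (hi : i ∈ d.support) :
    d - single i 1 + single (i + k) 1 = t ↔
      i + k ∈ t.support ∧ d = t - single (i + k) 1 + single i 1 := by
  rw [Finsupp.mem_support_iff] at hi ⊢
  constructor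
  · rintro rfl
    refine ⟨by simp [Finsupp.single_apply], Finsupp.ext fun j => ?_⟩
    simp only [Finsupp.coe_add, Finsupp.coe_tsub, Pi.add_apply, Pi.sub_apply, Finsupp.single_apply]
    split_ifs <;> subst_vars <;> omega
  · rintro ⟨ht, rfl⟩
    ext j
    simp only [Finsupp.coe_add, Finsupp.coe_tsub, Pi.add_apply, Pi.sub_apply,
      Finsupp.single_apply] at hi ⊢
    split_ifs at hi ⊢ <;> subst_vars <;> omega

lemma coeff_shiftMon {k : ℕ} (hk : 1 ≤ k) (d t : ℕ →₀ ℕ) :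
    coeff t (shiftMon k d) = ∑ j ∈ t.support,
      if k ≤ j ∧ d = t - single j 1 + single (j - k) 1 then (t (j - k) + 1 : ℝ) else 0 := by
  simp only [shiftMon, coeff_sum, coeff_smul, coeff_monomial, smul_eq_mul, mul_ite, mul_one,
    mul_zero]
  refine Finset.sum_bij_ne_zero (fun i _ _ => i + k) (fun i hi hne => ?_)
    (fun _ _ _ _ _ _ h => by omega) (fun j hj hne => ?_) (fun i hi hne => ?_)
  · exact ((sub_single_add_single_eq_iff hk hi).1 ((ite_ne_right_iff.1 hne).1)).1
  · obtain ⟨hkj, rfl⟩ := (ite_ne_right_iff.1 hne).1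
    have hjk : j - k ≠ j := by omega
    have hi : j - k ∈ (t - single j 1 + single (j - k) 1).support := by
      simp [hjk.symm]
    refine ⟨j - k, hi, ?_, by omega⟩
    rw [if_pos ((sub_single_add_single_eq_iff hk hi).2
      (by rw [Nat.sub_add_cancel hkj]; exact ⟨hj, rfl⟩))]
    simp only [Finsupp.coe_add, Finsupp.coe_tsub, Pi.add_apply, Pi.sub_apply,
      Finsupp.single_eq_same]
    positivity
  · have hit := (ite_ne_right_iff.1 hne).1
    rw [if_pos hit]
    obtain ⟨-, rfl⟩ := (sub_single_add_single_eq_iff hk hi).1 hit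
    rw [if_pos ⟨by omega, by rw [Nat.add_sub_cancel]⟩, Nat.add_sub_cancel]
    simp [Nat.one_le_iff_ne_zero.1 hk]

lemma coeff_extendMon_shiftMon {k : ℕ} (hk : 1 ≤ k) (P : MvPolynomial ℕ ℝ) (t : ℕ →₀ ℕ) :
    coeff t (extendMon (shiftMon k) P) = ∑ j ∈ t.support,
      if k ≤ j then (t (j - k) + 1 : ℝ) * coeff (t - single j 1 + single (j - k) 1) P else 0 := by
  simp only [coeff_extendMon, coeff_shiftMon hk, Finset.mul_sum, mul_ite, mul_zero]
  rw [Finset.sum_comm]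
  refine Finset.sum_congr rfl fun j _ => ?_
  split_ifs with hkj
  · simp only [hkj, true_and]
    rw [Finset.sum_ite_eq']
    split_ifs with h
    · ring
    · rw [notMem_support_iff.1 h, mul_zero]
  · simp [hkj]

def AdmissibleExponent (d : ℕ →₀ ℕ) : Prop := (∀ j ∈ d.support, 2 ≤ j) ∧ 3 ≤ d.degree

def Admissible (P : MvPolynomial ℕ ℝ) : Prop := ∀ d ∈ P.support, AdmissibleExponent d

lemma degree_sub_single_add_single {d : ℕ →₀ ℕ} {i : ℕ} (hi : i ∈ d.support) (k : ℕ) :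
    (d - single i 1 + single k 1).degree = d.degree := by
  have hd : d - single i 1 + single i 1 = d :=
    tsub_add_cancel_of_le (Finsupp.single_le_iff.2 (Nat.one_le_iff_ne_zero.2
      (Finsupp.mem_support_iff.1 hi)))
  conv_rhs => rw [← hd]
  simp only [map_add, Finsupp.degree_single]

lemma AdmissibleExponent.add_single {d : ℕ →₀ ℕ} (hd : AdmissibleExponent d) {k : ℕ}
    (hk : 2 ≤ k) : AdmissibleExponent (d + single k 1) := by
  refine ⟨fun j hj => ?_, by simp only [map_add, Finsupp.degree_single]; linarith [hd.2]⟩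
  rcases Finset.mem_union.1 (Finsupp.support_add hj) with hj | hj
  · exact hd.1 j hj
  · rwa [Finset.mem_singleton.1 (Finsupp.support_single_subset hj)]

lemma AdmissibleExponent.sub_single_add_single {d : ℕ →₀ ℕ} (hd : AdmissibleExponent d) {i k : ℕ}
    (hi : i ∈ d.support) (hk : 2 ≤ k) : AdmissibleExponent (d - single i 1 + single k 1) := by
  refine ⟨fun j hj => ?_, by rw [degree_sub_single_add_single hi]; exact hd.2⟩
  rcases Finset.mem_union.1 (Finsupp.support_add hj) with hj | hj
  · exact hd.1 j (Finsupp.support_tsub hj)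
  · rwa [Finset.mem_singleton.1 (Finsupp.support_single_subset hj)]

namespace Admissible

lemma zero : Admissible 0 := by simp [Admissible]

lemma monomial {d : ℕ →₀ ℕ} (hd : AdmissibleExponent d) (c : ℝ) : Admissible (monomial d c) :=
  fun _ h => by rwa [Finset.mem_singleton.1 (support_monomial_subset h)]

lemma add {P Q : MvPolynomial ℕ ℝ} (hP : Admissible P) (hQ : Admissible Q) :
    Admissible (P + Q) := fun d hd =>
  (Finset.mem_union.1 (support_add hd)).elim (hP d) (hQ d)

lemma neg {P : MvPolynomial ℕ ℝ} (hP : Admissible P) : Admissible (-P) := by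
  rwa [Admissible, support_neg]

lemma sub {P Q : MvPolynomial ℕ ℝ} (hP : Admissible P) (hQ : Admissible Q) :
    Admissible (P - Q) := by
  rw [sub_eq_add_neg]; exact hP.add hQ.neg

lemma smul {P : MvPolynomial ℕ ℝ} (hP : Admissible P) (c : ℝ) : Admissible (c • P) :=
  fun d hd => hP d (support_smul hd)

lemma sum {ι : Type*} {s : Finset ι} {P : ι → MvPolynomial ℕ ℝ} (hP : ∀ i ∈ s, Admissible (P i)) :
    Admissible (∑ i ∈ s, P i) := fun d hd => by
  obtain ⟨i, hi, hd⟩ := Finset.mem_biUnion.1 (support_sum hd)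
  exact hP i hi d hd

lemma extendMon {P : MvPolynomial ℕ ℝ} (hP : Admissible P) {f : (ℕ →₀ ℕ) → MvPolynomial ℕ ℝ}
    (hf : ∀ d, AdmissibleExponent d → Admissible (f d)) : Admissible (extendMon f P) :=
  sum fun d hd => (hf d (hP d hd)).smul _

lemma coeff_eq_zero {P : MvPolynomial ℕ ℝ} (hP : Admissible P) {t : ℕ →₀ ℕ} {j : ℕ}
    (hj : j ∈ t.support) (hj2 : j < 2) : coeff t P = 0 :=
  notMem_support_iff.1 fun ht => (hj2.trans_le ((hP t ht).1 j hj)).false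

end Admissible

lemma admissible_shiftMon (k : ℕ) {d : ℕ →₀ ℕ} (hd : AdmissibleExponent d) :
    Admissible (shiftMon k d) :=
  Admissible.sum fun i hi => (Admissible.monomial (hd.sub_single_add_single hi
    (by have := hd.1 i hi; omega)) 1).smul _

lemma admissible_Hmon {d : ℕ →₀ ℕ} (hd : AdmissibleExponent d) : Admissible (Hmon d) := by
  refine (Admissible.sum fun i hi => Admissible.sum fun l hl => ?_).smul _
  have := hd.1 i hi
  have := Finset.mem_Ico.1 hl
  exact (Admissible.monomial
    ((hd.sub_single_add_single hi (by omega)).add_single (by omega)) 1).smul _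

lemma Admissible.D1op {P : MvPolynomial ℕ ℝ} (hP : Admissible P) : Admissible (D1op P) :=
  hP.extendMon fun _ => admissible_shiftMon 1

lemma Admissible.D2op {P : MvPolynomial ℕ ℝ} (hP : Admissible P) : Admissible (D2op P) :=
  hP.extendMon fun _ => admissible_shiftMon 2

lemma Admissible.Lop {P : MvPolynomial ℕ ℝ} (hP : Admissible P) : Admissible (Lop P) :=
  (hP.D1op.D1op.sub hP.D2op).smul _

lemma Admissible.Hop {P : MvPolynomial ℕ ℝ} (hP : Admissible P) : Admissible (Hop P) :=
  hP.extendMon fun _ => admissible_Hmon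

lemma X_mul_X_mul_X (a b c : ℕ) :
    (X a * X b * X c : MvPolynomial ℕ ℝ) = monomial (single a 1 + single b 1 + single c 1) 1 := by
  simp only [X, monomial_mul, one_mul]

lemma admissibleExponent_single_add_single_add_single {a b c : ℕ} (ha : 2 ≤ a) (hb : 2 ≤ b)
    (hc : 2 ≤ c) : AdmissibleExponent (single a 1 + single b 1 + single c 1) := by
  refine ⟨fun j hj => ?_, by simp only [map_add, Finsupp.degree_single]; rfl⟩
  have hj := Finsupp.mem_support_iff.1 hj
  simp only [Finsupp.coe_add, Pi.add_apply, Finsupp.single_apply] at hj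
  split_ifs at hj <;> omega

lemma admissible_Apoly {n : ℕ} (hn : 2 ≤ n) : Admissible (Apoly n) := by
  refine (Admissible.sum fun k hk => ?_).neg
  have := Finset.mem_Ico.1 hk
  rw [X_mul_X_mul_X]
  exact (Admissible.monomial (admissibleExponent_single_add_single_add_single
    (by omega) (by omega) (by omega)) 1).smul _

lemma admissible_Rpoly : ∀ n, Admissible (Rpoly n)
  | 0 | 1 | 2 => Admissible.zero
  | n + 3 => ((admissible_Apoly (by omega)).add (admissible_Rpoly (n + 2)).Lop).add
      (admissible_Rpoly (n + 2)).Hop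

lemma coeff_extendMon_shiftMon_of_admissible {P : MvPolynomial ℕ ℝ} (hP : Admissible P) {k : ℕ}
    (hk : 1 ≤ k) (t : ℕ →₀ ℕ) :
    coeff t (extendMon (shiftMon k) P) = ∑ j ∈ t.support with k + 2 ≤ j,
      (t (j - k) + 1 : ℝ) * coeff (t - single j 1 + single (j - k) 1) P := by
  rw [coeff_extendMon_shiftMon hk, Finset.sum_filter]
  refine Finset.sum_congr rfl fun j _ => ?_
  by_cases hj : k + 2 ≤ j
  · rw [if_pos (by omega), if_pos hj]
  rw [if_neg hj]
  split_ifs with hkj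
  · have hjk : j - k ≠ j := by omega
    rw [hP.coeff_eq_zero (j := j - k) (by simp [hjk.symm]) (by omega), mul_zero]
  · rfl

def twoMM (m : ℕ) : ℕ →₀ ℕ := single 2 1 + single m 2

lemma twoMM_apply (m j : ℕ) : twoMM m j = (if 2 = j then 1 else 0) + (if m = j then 2 else 0) := by
  simp only [twoMM, Finsupp.coe_add, Pi.add_apply, Finsupp.single_apply]

lemma mem_support_twoMM {m j : ℕ} : j ∈ (twoMM m).support ↔ j = 2 ∨ j = m := by
  rw [Finsupp.mem_support_iff, twoMM_apply]
  split_ifs <;> omega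

lemma coeff_D1op_of_admissible {P : MvPolynomial ℕ ℝ} (hP : Admissible P) (t : ℕ →₀ ℕ) :
    coeff t (D1op P) = ∑ j ∈ t.support with 3 ≤ j,
      (t (j - 1) + 1 : ℝ) * coeff (t - single j 1 + single (j - 1) 1) P :=
  coeff_extendMon_shiftMon_of_admissible hP le_rfl t

lemma coeff_D2op_of_admissible {P : MvPolynomial ℕ ℝ} (hP : Admissible P) (t : ℕ →₀ ℕ) :
    coeff t (D2op P) = ∑ j ∈ t.support with 4 ≤ j,
      (t (j - 2) + 1 : ℝ) * coeff (t - single j 1 + single (j - 2) 1) P :=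
  coeff_extendMon_shiftMon_of_admissible hP one_le_two t

section
variable {m : ℕ} {P : MvPolynomial ℕ ℝ}

lemma coeff_twoMM_D1op (hm : 4 ≤ m) (hP : Admissible P) :
    coeff (twoMM m) (D1op P) = coeff (twoMM m - single m 1 + single (m - 1) 1) P := by
  have hs : {j ∈ (twoMM m).support | 3 ≤ j} = {m} := by
    ext j; simp only [Finset.mem_filter, mem_support_twoMM, Finset.mem_singleton]; omega
  rw [coeff_D1op_of_admissible hP, hs, Finset.sum_singleton,
    twoMM_apply, if_neg (by omega), if_neg (by omega)]
  simp

lemma coeff_twoMM_D2op (hm : 4 ≤ m) (hP : Admissible P) :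
    coeff (twoMM m) (D2op P) =
      (twoMM m (m - 2) + 1 : ℝ) * coeff (twoMM m - single m 1 + single (m - 2) 1) P := by
  have hs : {j ∈ (twoMM m).support | 4 ≤ j} = {m} := by
    ext j; simp only [Finset.mem_filter, mem_support_twoMM, Finset.mem_singleton]; omega
  rw [coeff_D2op_of_admissible hP, hs, Finset.sum_singleton]

lemma coeff_twoMM_sub_add_D1op (hm : 4 ≤ m) (hP : Admissible P) :
    coeff (twoMM m - single m 1 + single (m - 1) 1) (D1op P) =
      (twoMM m (m - 2) + 1 : ℝ) * coeff (twoMM m - single m 1 + single (m - 2) 1) P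
        + 2 * coeff (twoMM (m - 1)) P := by
  set u := twoMM m - single m 1 + single (m - 1) 1
  have hu : ∀ j, u j = (if 2 = j then 1 else 0) + (if m - 1 = j then 1 else 0)
      + (if m = j then 1 else 0) := fun j => by
    simp only [u, Finsupp.coe_add, Finsupp.coe_tsub, Pi.add_apply, Pi.sub_apply, twoMM_apply,
      Finsupp.single_apply]
    split_ifs <;> omega
  have hs : {j ∈ u.support | 3 ≤ j} = {m - 1, m} := by
    ext j
    simp only [Finset.mem_filter, Finsupp.mem_support_iff, hu, Finset.mem_insert,
      Finset.mem_singleton]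
    split_ifs <;> omega
  rw [coeff_D1op_of_admissible hP, hs,
    Finset.sum_pair (by omega), show m - 1 - 1 = m - 2 by omega]
  congr 2
  · norm_cast; rw [hu, twoMM_apply]; split_ifs <;> omega
  · congr 1; ext j
    simp only [Finsupp.coe_add, Finsupp.coe_tsub, Pi.add_apply, Pi.sub_apply, hu, twoMM_apply,
      Finsupp.single_apply]
    split_ifs <;> omega
  · rw [hu]; split_ifs <;> first | omega | norm_num
  · congr 1; ext j
    simp only [Finsupp.coe_add, Finsupp.coe_tsub, Pi.add_apply, Pi.sub_apply, hu, twoMM_apply,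
      Finsupp.single_apply]
    split_ifs <;> omega

lemma coeff_twoMM_Lop (hm : 4 ≤ m) (hP : Admissible P) :
    coeff (twoMM m) (Lop P) = coeff (twoMM (m - 1)) P := by
  rw [Lop, coeff_smul, coeff_sub, coeff_twoMM_D1op hm hP.D1op,
    coeff_twoMM_sub_add_D1op hm hP, coeff_twoMM_D2op hm hP, smul_eq_mul]
  ring

end

lemma coeff_Hmon_eq_zero {d t : ℕ →₀ ℕ} (ht : t.degree ≤ d.degree) : coeff t (Hmon d) = 0 := by
  simp only [Hmon, coeff_smul, coeff_sum, coeff_monomial, smul_eq_mul]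
  refine mul_eq_zero_of_right _ (Finset.sum_eq_zero fun i hi => Finset.sum_eq_zero fun l _ => ?_)
  rw [if_neg, mul_zero]
  intro h
  have := congrArg Finsupp.degree h
  rw [map_add, degree_sub_single_add_single hi, Finsupp.degree_single] at this
  omega

lemma coeff_Hop_eq_zero {P : MvPolynomial ℕ ℝ} (hP : Admissible P) {t : ℕ →₀ ℕ}
    (ht : t.degree ≤ 3) : coeff t (Hop P) = 0 := by
  rw [Hop, coeff_extendMon]
  exact Finset.sum_eq_zero fun d hd => by
    rw [coeff_Hmon_eq_zero (ht.trans (hP d hd).2), mul_zero]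

lemma degree_twoMM (m : ℕ) : (twoMM m).degree = 3 := by
  simp only [twoMM, map_add, Finsupp.degree_single]

lemma single_add_single_add_single_eq_twoMM_iff {m k : ℕ} (hk : k ∈ Finset.Ico 1 m) :
    single (1 + k) 1 + single (1 + m - k) 1 + single m 1 = twoMM m ↔ k = 1 ∨ k = m - 1 := by
  have := Finset.mem_Ico.1 hk
  constructor
  · intro h
    have h2 := congrArg (· 2) h
    simp only [Finsupp.coe_add, Pi.add_apply, twoMM_apply, Finsupp.single_apply] at h2
    split_ifs at h2 <;> omega
  · intro h
    ext j
    simp only [Finsupp.coe_add, Pi.add_apply, twoMM_apply, Finsupp.single_apply]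
    split_ifs <;> omega

lemma coeff_twoMM_Apoly {m : ℕ} (hm : 3 ≤ m) : coeff (twoMM m) (Apoly m) = -(2 * m) := by
  have hs : {k ∈ Finset.Ico 1 m | k = 1 ∨ k = m - 1} = {1, m - 1} := by
    ext k
    simp only [Finset.mem_filter, Finset.mem_Ico, Finset.mem_insert, Finset.mem_singleton]
    omega
  simp only [Apoly, coeff_neg, coeff_sum, X_mul_X_mul_X, coeff_smul, coeff_monomial, smul_eq_mul,
    mul_ite, mul_one, mul_zero]
  rw [Finset.sum_congr rfl fun k hk =>
      if_congr (single_add_single_add_single_eq_twoMM_iff hk) rfl rfl,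
    ← Finset.sum_filter, hs, Finset.sum_pair (by omega), Nat.choose_one_right,
    Nat.choose_symm (by omega), Nat.choose_one_right]
  ring

lemma Rpoly_succ {n : ℕ} (hn : 2 ≤ n) :
    Rpoly (n + 1) = Apoly n + Lop (Rpoly n) + Hop (Rpoly n) := by
  obtain ⟨k, rfl⟩ := Nat.exists_eq_add_of_le' hn
  rfl

lemma coeff_twoMM_Rpoly_succ_eq_add_coeff_Lop {m : ℕ} (hm : 3 ≤ m) :
    coeff (twoMM m) (Rpoly (m + 1)) = -(2 * m) + coeff (twoMM m) (Lop (Rpoly m)) := by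
  rw [Rpoly_succ (by omega), coeff_add, coeff_add, coeff_twoMM_Apoly hm,
    coeff_Hop_eq_zero (admissible_Rpoly m) (degree_twoMM m).le, add_zero]

lemma coeff_twoMM_three_Lop {P : MvPolynomial ℕ ℝ} (hP : Admissible P) :
    coeff (twoMM 3) (Lop P) = 3 * coeff (single 2 3) P := by
  have hD1 : coeff (twoMM 3) (D1op (D1op P)) = 2 * coeff (single 2 2 + single 3 1) (D1op P) := by
    have hs : {j ∈ (twoMM 3).support | 3 ≤ j} = {3} := by
      ext j; simp only [Finset.mem_filter, mem_support_twoMM, Finset.mem_singleton]; omega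
    have hsrc : twoMM 3 - single 3 1 + single (3 - 1) 1 = single 2 2 + single 3 1 := by
      ext j
      simp only [Finsupp.coe_add, Finsupp.coe_tsub, Pi.add_apply, Pi.sub_apply, twoMM_apply,
        Finsupp.single_apply]
      split_ifs <;> omega
    rw [coeff_D1op_of_admissible hP.D1op, hs, Finset.sum_singleton, hsrc]
    norm_num [twoMM_apply]
  have hD1' : coeff (single 2 2 + single 3 1) (D1op P) = 3 * coeff (single 2 3) P := by
    have hs : {j ∈ (single 2 2 + single 3 1 : ℕ →₀ ℕ).support | 3 ≤ j} = {3} := by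
      ext j
      simp only [Finset.mem_filter, Finsupp.mem_support_iff, Finsupp.coe_add, Pi.add_apply,
        Finsupp.single_apply, Finset.mem_singleton]
      split_ifs <;> omega
    have hsrc : single 2 2 + single 3 1 - single 3 1 + single (3 - 1) 1 = single 2 3 := by
      ext j
      simp only [Finsupp.coe_add, Finsupp.coe_tsub, Pi.add_apply, Pi.sub_apply,
        Finsupp.single_apply]
      split_ifs <;> omega
    rw [coeff_D1op_of_admissible hP, hs, Finset.sum_singleton, hsrc]
    norm_num
  have hD2 : coeff (twoMM 3) (D2op P) = 0 := by
    have hs : {j ∈ (twoMM 3).support | 4 ≤ j} = ∅ :=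
      Finset.filter_eq_empty_iff.2 fun j hj => by rw [mem_support_twoMM] at hj; omega
    rw [coeff_D2op_of_admissible hP, hs, Finset.sum_empty]
  rw [Lop, coeff_smul, coeff_sub, hD1, hD1', hD2, smul_eq_mul]
  ring

lemma coeff_single_two_three_Rpoly_three : coeff (single 2 3) (Rpoly 3) = -2 := by
  have hA : Apoly 2 = monomial (single 2 3) (-2) := by
    rw [Apoly, show Finset.Ico 1 2 = {1} from rfl, Finset.sum_singleton, X_mul_X_mul_X,
      ← Finsupp.single_add, ← Finsupp.single_add, smul_monomial, ← map_neg]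
    norm_num
  simp [Rpoly, Lop, Hop, D1op, D2op, extendMon, hA]

theorem coeff_twoMM_Rpoly_succ {n : ℕ} (hn : 3 ≤ n) :
    coeff (twoMM n) (Rpoly (n + 1)) = -(n * (n + 1)) := by
  induction n, hn using Nat.le_induction with
  | base =>
    rw [coeff_twoMM_Rpoly_succ_eq_add_coeff_Lop le_rfl,
      coeff_twoMM_three_Lop (admissible_Rpoly 3),
      coeff_single_two_three_Rpoly_three]
    norm_num
  | succ m hm ih =>
    rw [coeff_twoMM_Rpoly_succ_eq_add_coeff_Lop (by omega),
      coeff_twoMM_Lop (by omega) (admissible_Rpoly _), Nat.add_sub_cancel, ih]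
    push_cast
    ring

/-- The coefficient of `T_2 T_n²` in `R_{n+1}` equals `-n(n+1)`. -/
theorem statement17 (n : ℕ) (hn : 3 ≤ n) :
    coeffR (n + 1) ({n, n, 2} : Multiset ℕ) = -((n : ℝ) * ((n : ℝ) + 1)) := by
  have ht : Multiset.toFinsupp ({n, n, 2} : Multiset ℕ) = twoMM n := by
    ext j
    simp only [Multiset.toFinsupp_apply, twoMM_apply, Multiset.insert_eq_cons,
      Multiset.count_cons, Multiset.count_singleton]
    split_ifs <;> omega
  rw [coeffR, ht, coeff_twoMM_Rpoly_succ hn]
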